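/- arXiv:2106.09074 — 2 statements merged into one kernel-verified Lean document; each statement's English description precedes it below -/
import Mathlib

section
/- Let Ω be partitioned into two Lipschitz subdomains Ωᴾ and Ωᴱ with interface Σ = ∂Ωᴾ ∩ ∂Ωᴱ, and let μᴾ, μᴱ > 0, λᴾ, λᴱ ≥ 0, α ≥ 0, c₀ ≥ 0, κ, ξ > 0. Define the interface multilinear form B_I on (H × V × Qᴾ)², where H = L²(Ωᴾ)^m × L²(Ωᴾ) × L²(Ωᴱ)^m × L²(Ωᴱ), V = H¹₀(Ω)^d, Qᴾ = H¹(Ωᴾ). Then for the choice of test function (ω⃗, −u, −p) one has B_I((ω⃗,u,pᴾ),(ω⃗,−u,−pᴾ)) = ‖ωᴱ‖²_{0,Ωᴱ} + (2μᴱ+λᴱ)⁻¹‖pᴱ‖²_{0,Ωᴱ} + ‖ωᴾ‖²_{0,Ωᴾ} + (2μᴾ+λᴾ)⁻¹‖φᴾ‖²_{0,Ωᴾ} − 2α(2μᴾ+λᴾ)⁻¹(pᴾ,φᴾ)_{0,Ωᴾ} + (c₀ + α²(2μᴾ+λᴾ)⁻¹)‖pᴾ‖²_{0,Ωᴾ}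 + ‖(κ/ξ)^{1/2}∇pᴾ‖²_{0,Ωᴾ}, and this quantity is nonnegative. -/
open scoped RealInnerProductSpace

section CompletingTheSquare

variable {E : Type*} [NormedAddCommGroup E] [InnerProductSpace ℝ E]

theorem norm_sub_smul_sq_real (a : ℝ) (x y : E) :
    ‖x - a • y‖ ^ 2 = ‖x‖ ^ 2 - 2 * a * ⟪y, x⟫ + a ^ 2 * ‖y‖ ^ 2 := by
  rw [norm_sub_sq_real, norm_smul, inner_smul_right, real_inner_comm, Real.norm_eq_abs, mul_pow,
    sq_abs]
  ring

theorem inv_mul_norm_sub_smul_sq (d a : ℝ) (x y : E) :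
    d⁻¹ * ‖x - a • y‖ ^ 2 = d⁻¹ * ‖x‖ ^ 2 - 2 * a * d⁻¹ * ⟪y, x⟫ + a ^ 2 / d * ‖y‖ ^ 2 := by
  rw [norm_sub_smul_sq_real]
  ring

end CompletingTheSquare

theorem stmt11_general
    {Wp Lp We Le V Qp G : Type*}
    [NormedAddCommGroup Wp] [InnerProductSpace ℝ Wp]
    [NormedAddCommGroup Lp] [InnerProductSpace ℝ Lp]
    [NormedAddCommGroup We] [InnerProductSpace ℝ We]
    [NormedAddCommGroup Le] [InnerProductSpace ℝ Le]
    [NormedAddCommGroup V] [InnerProductSpace ℝ V]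
    [NormedAddCommGroup Qp] [InnerProductSpace ℝ Qp]
    [NormedAddCommGroup G] [InnerProductSpace ℝ G]
    (curlP : V →ₗ[ℝ] Wp) (divP : V →ₗ[ℝ] Lp)
    (curlE : V →ₗ[ℝ] We) (divE : V →ₗ[ℝ] Le)
    (ι : Qp →ₗ[ℝ] Lp) (gw : Qp →ₗ[ℝ] G)
    (μP lamP μE lamE α c0 : ℝ)
    (hμP : 0 < μP) (hlamP : 0 ≤ lamP) (hμE : 0 < μE) (hlamE : 0 ≤ lamE)
    (hc0 : 0 ≤ c0)
    (ωP : Wp) (φP : Lp) (ωE : We) (pE : Le) (u : V) (p : Qp) :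
    ((⟪ωP, ωP⟫ + (2 * μP + lamP)⁻¹ * ⟪φP, φP⟫
        + ⟪ωE, ωE⟫ + (2 * μE + lamE)⁻¹ * ⟪pE, pE⟫)
      + (-Real.sqrt μP * ⟪ωP, curlP u⟫ + ⟪φP, divP u⟫
          - Real.sqrt μE * ⟪ωE, curlE u⟫ + ⟪pE, divE u⟫)
      - α / (2 * μP + lamP) * ⟪ι p, φP⟫
      + (-Real.sqrt μP * ⟪ωP, curlP (-u)⟫ + ⟪φP, divP (-u)⟫
          - Real.sqrt μE * ⟪ωE, curlE (-u)⟫ + ⟪pE, divE (-u)⟫)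
      + α / (2 * μP + lamP) * ⟪ι (-p), φP⟫
      - ((c0 + α ^ 2 / (2 * μP + lamP)) * ⟪ι p, ι (-p)⟫ + ⟪gw p, gw (-p)⟫)
      = ‖ωE‖ ^ 2 + (2 * μE + lamE)⁻¹ * ‖pE‖ ^ 2
        + ‖ωP‖ ^ 2 + (2 * μP + lamP)⁻¹ * ‖φP‖ ^ 2
        - 2 * α * (2 * μP + lamP)⁻¹ * ⟪ι p, φP⟫
        + (c0 + α ^ 2 / (2 * μP + lamP)) * ‖ι p‖ ^ 2 + ‖gw p‖ ^ 2) ∧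
    0 ≤ ‖ωE‖ ^ 2 + (2 * μE + lamE)⁻¹ * ‖pE‖ ^ 2
        + ‖ωP‖ ^ 2 + (2 * μP + lamP)⁻¹ * ‖φP‖ ^ 2
        - 2 * α * (2 * μP + lamP)⁻¹ * ⟪ι p, φP⟫
        + (c0 + α ^ 2 / (2 * μP + lamP)) * ‖ι p‖ ^ 2 + ‖gw p‖ ^ 2 := by
  constructor
  -- the test function negates `u` and `pᴾ`, so the `b₁` terms cancel and `b₂`, `b₃` add up
  · simp only [map_neg, inner_neg_left, inner_neg_right, real_inner_self_eq_norm_sq]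
    ring
  -- the cross term is absorbed by completing the square in `φᴾ - α • ι pᴾ`
  · have hE : 0 ≤ (2 * μE + lamE)⁻¹ * ‖pE‖ ^ 2 := by positivity
    have hP : 0 ≤ (2 * μP + lamP)⁻¹ * ‖φP - α • ι p‖ ^ 2 := by positivity
    have hc : 0 ≤ c0 * ‖ι p‖ ^ 2 := by positivity
    rw [inv_mul_norm_sub_smul_sq] at hP
    linarith [sq_nonneg ‖ωE‖, sq_nonneg ‖ωP‖, sq_nonneg ‖gw p‖]

/-- evaluating the interface multilinear form B_I at the test function
(ω⃗, −u, −pᴾ) gives the stated sum of squared norms minus the total-pressure cross term,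
and this quantity is nonnegative. -/
theorem stmt11
    {Wp Lp We Le V Qp G : Type*}
    [NormedAddCommGroup Wp] [InnerProductSpace ℝ Wp]
    [NormedAddCommGroup Lp] [InnerProductSpace ℝ Lp]
    [NormedAddCommGroup We] [InnerProductSpace ℝ We]
    [NormedAddCommGroup Le] [InnerProductSpace ℝ Le]
    [NormedAddCommGroup V] [InnerProductSpace ℝ V]
    [NormedAddCommGroup Qp] [InnerProductSpace ℝ Qp]
    [NormedAddCommGroup G] [InnerProductSpace ℝ G]
    (curlP : V →ₗ[ℝ] Wp) (divP : V →ₗ[ℝ] Lp)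
    (curlE : V →ₗ[ℝ] We) (divE : V →ₗ[ℝ] Le)
    (ι : Qp →ₗ[ℝ] Lp) (gw : Qp →ₗ[ℝ] G)
    (μP lamP μE lamE α c0 κ ξ : ℝ)
    (hμP : 0 < μP) (hlamP : 0 ≤ lamP) (hμE : 0 < μE) (hlamE : 0 ≤ lamE)
    (hα : 0 ≤ α) (hc0 : 0 ≤ c0) (hκ : 0 < κ) (hξ : 0 < ξ)
    (ωP : Wp) (φP : Lp) (ωE : We) (pE : Le) (u : V) (p : Qp) :
    ((⟪ωP, ωP⟫ + (2 * μP + lamP)⁻¹ * ⟪φP, φP⟫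
        + ⟪ωE, ωE⟫ + (2 * μE + lamE)⁻¹ * ⟪pE, pE⟫)
      + (-Real.sqrt μP * ⟪ωP, curlP u⟫ + ⟪φP, divP u⟫
          - Real.sqrt μE * ⟪ωE, curlE u⟫ + ⟪pE, divE u⟫)
      - α / (2 * μP + lamP) * ⟪ι p, φP⟫
      + (-Real.sqrt μP * ⟪ωP, curlP (-u)⟫ + ⟪φP, divP (-u)⟫
          - Real.sqrt μE * ⟪ωE, curlE (-u)⟫ + ⟪pE, divE (-u)⟫)
      + α / (2 * μP + lamP) * ⟪ι (-p), φP⟫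
      - ((c0 + α ^ 2 / (2 * μP + lamP)) * ⟪ι p, ι (-p)⟫ + ⟪gw p, gw (-p)⟫)
      = ‖ωE‖ ^ 2 + (2 * μE + lamE)⁻¹ * ‖pE‖ ^ 2
        + ‖ωP‖ ^ 2 + (2 * μP + lamP)⁻¹ * ‖φP‖ ^ 2
        - 2 * α * (2 * μP + lamP)⁻¹ * ⟪ι p, φP⟫
        + (c0 + α ^ 2 / (2 * μP + lamP)) * ‖ι p‖ ^ 2 + ‖gw p‖ ^ 2) ∧
    0 ≤ ‖ωE‖ ^ 2 + (2 * μE + lamE)⁻¹ * ‖pE‖ ^ 2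
        + ‖ωP‖ ^ 2 + (2 * μP + lamP)⁻¹ * ‖φP‖ ^ 2
        - 2 * α * (2 * μP + lamP)⁻¹ * ⟪ι p, φP⟫
        + (c0 + α ^ 2 / (2 * μP + lamP)) * ‖ι p‖ ^ 2 + ‖gw p‖ ^ 2 :=
  stmt11_general curlP divP curlE divE ι gw μP lamP μE lamE α c0 hμP hlamP hμE hlamE hc0 ωP φP ωE pE
    u p
end

section
/- Let K be a simplex with diameter h_K, b_K the interior bubble function on K (product of barycentric coordinates, scaled to max 1), and suppose for all polynomials v of degree ≤ r on K the inverse estimates ‖v‖_{0,K} ≲ ‖b_K^{1/2}v‖_{0,K}, ‖b_K v‖_{0,K} ≲ ‖v‖_{0,K}, ‖∇(b_K v)‖_{0,K} ≲ h_K⁻¹‖v‖_{0,K} hold. Let μ > 0, let ω, ω_h, p, p_h, f, f_h be (vector/scalar) fields on K with f − √μ curl ω − ∇p = 0 in K, where ω_h, p_h, f_h are polynomials. Then the residual R₁ := f_h − √μ curl ω_h − ∇p_h satisfies h_K μ^{-1/2}‖R₁‖_{0,K} ≲ μ^{-1/2} h_K ‖f − f_h‖_{0,K} + μ^{-1/2}‖p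 − p_h‖_{0,K} + ‖ω − ω_h‖_{0,K}, with hidden constant depending only on shape regularity and polynomial degree. -/
/-! Test the residual `R` against its own bubble `bub R`. The first inverse estimate gives
`‖R‖² ≲ ⟪R, bub R⟫`; writing `R` as data error plus curl and gradient of the errors and
moving curl and gradient onto `bub R` (which vanishes on `∂K`) bounds `⟪R, bub R⟫` by
`‖R‖` times the errors, with a factor `h_K⁻¹` from the inverse estimate for `∇(bub R)`. -/

open scoped RealInnerProductSpace

section BubbleTest

variable {Vec Rot Sca Qsp : Type*}
  [NormedAddCommGroup Vec] [InnerProductSpace ℝ Vec]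
  [NormedAddCommGroup Rot] [InnerProductSpace ℝ Rot]
  [NormedAddCommGroup Sca] [InnerProductSpace ℝ Sca]
  [AddCommGroup Qsp] [Module ℝ Qsp]
  {curl : Rot →ₗ[ℝ] Vec} {grad : Qsp →ₗ[ℝ] Vec} {ιQ : Qsp →ₗ[ℝ] Sca}
  {curlT : Vec →ₗ[ℝ] Rot} {divT : Vec →ₗ[ℝ] Sca}
  {gradNorm : Vec → ℝ} {bub : Vec →ₗ[ℝ] Vec} {P : Submodule ℝ Vec} {hK C₀ : ℝ}

lemma inner_bub_le (hinv2 : ∀ v ∈ P, ‖bub v‖ ≤ C₀ * ‖v‖) (e : Vec) {v : Vec} (hv : v ∈ P) :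
    ⟪e, bub v⟫ ≤ C₀ * ‖e‖ * ‖v‖ :=
  calc ⟪e, bub v⟫ ≤ ‖e‖ * ‖bub v‖ := real_inner_le_norm _ _
    _ ≤ ‖e‖ * (C₀ * ‖v‖) := by gcongr; exact hinv2 v hv
    _ = C₀ * ‖e‖ * ‖v‖ := by ring

lemma inner_curl_bub_le (hinv3 : ∀ v ∈ P, gradNorm (bub v) ≤ C₀ * hK⁻¹ * ‖v‖)
    (hcurlbd : ∀ z : Vec, ‖curlT z‖ ≤ gradNorm z)
    (hIBPcurl : ∀ (θ : Rot), ∀ v ∈ P, ⟪curl θ, bub v⟫ = ⟪θ, curlT (bub v)⟫)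
    (θ : Rot) {v : Vec} (hv : v ∈ P) :
    ⟪curl θ, bub v⟫ ≤ C₀ * hK⁻¹ * ‖θ‖ * ‖v‖ :=
  calc ⟪curl θ, bub v⟫ = ⟪θ, curlT (bub v)⟫ := hIBPcurl θ v hv
    _ ≤ ‖θ‖ * ‖curlT (bub v)‖ := real_inner_le_norm _ _
    _ ≤ ‖θ‖ * (C₀ * hK⁻¹ * ‖v‖) := by gcongr; exact (hcurlbd _).trans (hinv3 v hv)
    _ = C₀ * hK⁻¹ * ‖θ‖ * ‖v‖ := by ring

lemma inner_grad_bub_le (hinv3 : ∀ v ∈ P, gradNorm (bub v) ≤ C₀ * hK⁻¹ * ‖v‖)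
    (hdivbd : ∀ z : Vec, ‖divT z‖ ≤ gradNorm z)
    (hIBPgrad : ∀ (s : Qsp), ∀ v ∈ P, ⟪grad s, bub v⟫ = -⟪ιQ s, divT (bub v)⟫)
    (s : Qsp) {v : Vec} (hv : v ∈ P) :
    ⟪grad s, bub v⟫ ≤ C₀ * hK⁻¹ * ‖ιQ s‖ * ‖v‖ :=
  calc ⟪grad s, bub v⟫ = -⟪ιQ s, divT (bub v)⟫ := hIBPgrad s v hv
    _ ≤ |⟪ιQ s, divT (bub v)⟫| := neg_le_abs _
    _ ≤ ‖ιQ s‖ * ‖divT (bub v)‖ := abs_real_inner_le_norm _ _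
    _ ≤ ‖ιQ s‖ * (C₀ * hK⁻¹ * ‖v‖) := by gcongr; exact (hdivbd _).trans (hinv3 v hv)
    _ = C₀ * hK⁻¹ * ‖ιQ s‖ * ‖v‖ := by ring

lemma le_of_sq_le_mul {a b : ℝ} (hb : 0 ≤ b) (h : a ^ 2 ≤ a * b) : a ≤ b := by
  nlinarith

lemma norm_le_of_eq_add_curl_add_grad (hC₀ : 0 ≤ C₀)
    (hinv1 : ∀ v ∈ P, ‖v‖ ^ 2 ≤ C₀ * ⟪v, bub v⟫)
    (hinv2 : ∀ v ∈ P, ‖bub v‖ ≤ C₀ * ‖v‖)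
    (hinv3 : ∀ v ∈ P, gradNorm (bub v) ≤ C₀ * hK⁻¹ * ‖v‖)
    (hcurlbd : ∀ z : Vec, ‖curlT z‖ ≤ gradNorm z)
    (hdivbd : ∀ z : Vec, ‖divT z‖ ≤ gradNorm z)
    (hIBPcurl : ∀ (θ : Rot), ∀ v ∈ P, ⟪curl θ, bub v⟫ = ⟪θ, curlT (bub v)⟫)
    (hIBPgrad : ∀ (s : Qsp), ∀ v ∈ P, ⟪grad s, bub v⟫ = -⟪ιQ s, divT (bub v)⟫)
    (hhK : 0 ≤ hK) {c : ℝ} (hc : 0 ≤ c) {R e : Vec} {θ : Rot} {s : Qsp}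
    (hR : R ∈ P) (hRe : R = e + c • curl θ + grad s) :
    ‖R‖ ≤ C₀ ^ 2 * (‖e‖ + c * hK⁻¹ * ‖θ‖ + hK⁻¹ * ‖ιQ s‖) := by
  have hpair : ⟪R, bub R⟫ ≤ C₀ * ‖R‖ * (‖e‖ + c * hK⁻¹ * ‖θ‖ + hK⁻¹ * ‖ιQ s‖) := by
    have he := inner_bub_le hinv2 e hR
    have hcurl := inner_curl_bub_le hinv3 hcurlbd hIBPcurl θ hR
    have hgrad := inner_grad_bub_le hinv3 hdivbd hIBPgrad s hR
    calc ⟪R, bub R⟫ = ⟪e, bub R⟫ + c * ⟪curl θ, bub R⟫ + ⟪grad s, bub R⟫ := by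
          nth_rw 1 [hRe]
          rw [inner_add_left, inner_add_left, real_inner_smul_left]
      _ ≤ C₀ * ‖e‖ * ‖R‖ + c * (C₀ * hK⁻¹ * ‖θ‖ * ‖R‖) + C₀ * hK⁻¹ * ‖ιQ s‖ * ‖R‖ := by
          gcongr
      _ = C₀ * ‖R‖ * (‖e‖ + c * hK⁻¹ * ‖θ‖ + hK⁻¹ * ‖ιQ s‖) := by ring
  refine le_of_sq_le_mul (by positivity) ?_
  calc ‖R‖ ^ 2 ≤ C₀ * ⟪R, bub R⟫ := hinv1 R hR
    _ ≤ C₀ * (C₀ * ‖R‖ * (‖e‖ + c * hK⁻¹ * ‖θ‖ + hK⁻¹ * ‖ιQ s‖)) := by gcongr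
    _ = ‖R‖ * (C₀ ^ 2 * (‖e‖ + c * hK⁻¹ * ‖θ‖ + hK⁻¹ * ‖ιQ s‖)) := by ring

end BubbleTest

/-- Lemma 2.3: bubble-function efficiency bound for the momentum residual
R₁ = f_h − √μ curl ω_h − ∇p_h. `P` is the space of (vector-valued) polynomials of degree
≤ r on the element K, `bub` is multiplication by the interior bubble b_K, `gradNorm`
bounds the norm of the gradient, `curlT`/`divT` are the curl/divergence of vector fields
(with the integration-by-parts identities valid since bub v vanishes on ∂K), and the
three listed inverse estimates hold with constant C₀.  The hidden constant C depends
only on shape regularity and polynomial degree (i.e. on C₀), not on the fields. -/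
theorem stmt16
    {Vec Rot Sca Qsp : Type*}
    [NormedAddCommGroup Vec] [InnerProductSpace ℝ Vec]
    [NormedAddCommGroup Rot] [InnerProductSpace ℝ Rot]
    [NormedAddCommGroup Sca] [InnerProductSpace ℝ Sca]
    [AddCommGroup Qsp] [Module ℝ Qsp]
    (curl : Rot →ₗ[ℝ] Vec) (grad : Qsp →ₗ[ℝ] Vec) (ιQ : Qsp →ₗ[ℝ] Sca)
    (curlT : Vec →ₗ[ℝ] Rot) (divT : Vec →ₗ[ℝ] Sca)
    (gradNorm : Vec → ℝ) (bub : Vec →ₗ[ℝ] Vec) (P : Submodule ℝ Vec)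
    (hK μ C₀ : ℝ) (hhK : 0 < hK) (hμ : 0 < μ) (hC₀ : 0 < C₀)
    (hinv1 : ∀ v ∈ P, ‖v‖ ^ 2 ≤ C₀ * ⟪v, bub v⟫)
    (hinv2 : ∀ v ∈ P, ‖bub v‖ ≤ C₀ * ‖v‖)
    (hinv3 : ∀ v ∈ P, gradNorm (bub v) ≤ C₀ * hK⁻¹ * ‖v‖)
    (hcurlbd : ∀ z : Vec, ‖curlT z‖ ≤ gradNorm z)
    (hdivbd : ∀ z : Vec, ‖divT z‖ ≤ gradNorm z)
    (hIBPcurl : ∀ (θ : Rot), ∀ v ∈ P, ⟪curl θ, bub v⟫ = ⟪θ, curlT (bub v)⟫)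
    (hIBPgrad : ∀ (s : Qsp), ∀ v ∈ P, ⟪grad s, bub v⟫ = -⟪ιQ s, divT (bub v)⟫) :
    ∃ C > (0 : ℝ), ∀ (ω ωh : Rot) (p ph : Qsp) (f fh : Vec),
      f - Real.sqrt μ • curl ω - grad p = 0 →
      (fh - Real.sqrt μ • curl ωh - grad ph) ∈ P →
      hK * (Real.sqrt μ)⁻¹ * ‖fh - Real.sqrt μ • curl ωh - grad ph‖
        ≤ C * ((Real.sqrt μ)⁻¹ * hK * ‖f - fh‖
            + (Real.sqrt μ)⁻¹ * ‖ιQ (p - ph)‖ + ‖ω - ωh‖) := by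
  refine ⟨C₀ ^ 2, by positivity, fun ω ωh p ph f fh heq hR => ?_⟩
  have hsμ : 0 < Real.sqrt μ := Real.sqrt_pos.mpr hμ
  have hRe : fh - Real.sqrt μ • curl ωh - grad ph
      = (fh - f) + Real.sqrt μ • curl (ω - ωh) + grad (p - ph) := by
    rw [sub_eq_iff_eq_add.mp (sub_eq_zero.mp heq), map_sub, map_sub, smul_sub]
    abel
  have hbound := norm_le_of_eq_add_curl_add_grad hC₀.le hinv1 hinv2 hinv3 hcurlbd hdivbd
    hIBPcurl hIBPgrad hhK.le hsμ.le hR hRe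
  calc hK * (Real.sqrt μ)⁻¹ * ‖fh - Real.sqrt μ • curl ωh - grad ph‖
      ≤ hK * (Real.sqrt μ)⁻¹ * (C₀ ^ 2 * (‖fh - f‖ + Real.sqrt μ * hK⁻¹ * ‖ω - ωh‖
          + hK⁻¹ * ‖ιQ (p - ph)‖)) := by gcongr
    _ = C₀ ^ 2 * ((Real.sqrt μ)⁻¹ * hK * ‖f - fh‖
          + (Real.sqrt μ)⁻¹ * ‖ιQ (p - ph)‖ + ‖ω - ωh‖) := by
      rw [norm_sub_rev fh f]; field_simp; ring
end
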